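/- Bound on the network disagreement term Ψ₂: Let X ⊆ ℝ^d be closed and convex, let ‖·‖ be a norm on ℝ^d with dual norm ‖·‖_*, let ψ : ℝ^d → ℝ be 1-strongly convex on X with respect to ‖·‖, and let α : ℕ → ℝ be positive. For t = 1,…,T and j = 1,…,n, let z_j(t), z̄(t) ∈ ℝ^d and let g_j(t) ∈ ℝ^d satisfy ‖g_j(t)‖_* ≤ L; let x_j(t) be a minimizer over X of x ↦ ⟨x, z_j(t)⟩ + ψ(x)/α(t−1) and y(t) a minimizer over X of x ↦ ⟨x, z̄(t)⟩ + ψ(x)/α(t−1). Then ∑_{t=1}^T ∑_{j=1}^n ⟨g_j(t), x_j(t) − y(t)⟩ ≤ L·∑_{t=1}^T ∑_{j=1}^n α(t−1)·‖z̄(t) − z_j(t)‖_*. -/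

import Mathlib

open Finset RealInnerProductSpace

/-- The dual norm `‖z‖_* = sup {⟨z, x⟩ : N x ≤ 1}` of a norm `N` on `ℝ^d`. -/
noncomputable def dualNorm {d : ℕ} (N : EuclideanSpace ℝ (Fin d) → ℝ)
    (z : EuclideanSpace ℝ (Fin d)) : ℝ :=
  sSup {r : ℝ | ∃ x : EuclideanSpace ℝ (Fin d), N x ≤ 1 ∧ r = ⟪z, x⟫}

/-- `N` is a norm on `ℝ^d` (triangle inequality, absolute homogeneity, definiteness). -/
def IsNorm {d : ℕ} (N : EuclideanSpace ℝ (Fin d) → ℝ) : Prop :=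
  (∀ x y, N (x + y) ≤ N x + N y) ∧ (∀ (c : ℝ) x, N (c • x) = |c| * N x) ∧
    (∀ x, N x = 0 ↔ x = 0)

/-- `ψ` is 1-strongly convex on `X` with respect to the norm `N`. -/
def StronglyConvexOnWith {d : ℕ} (X : Set (EuclideanSpace ℝ (Fin d)))
    (N : EuclideanSpace ℝ (Fin d) → ℝ) (ψ : EuclideanSpace ℝ (Fin d) → ℝ) : Prop :=
  ∀ ⦃x⦄, x ∈ X → ∀ ⦃y⦄, y ∈ X → ∀ ⦃θ : ℝ⦄, 0 ≤ θ → θ ≤ 1 →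
    ψ (θ • x + (1 - θ) • y) ≤ θ * ψ x + (1 - θ) * ψ y - θ * (1 - θ) / 2 * N (x - y) ^ 2

open Filter Topology

/-!
Each summand is bounded by `L · N(x_j(t) − y(t))`, so it suffices that the minimizers of the two
regularized linear objectives `⟨·, z⟩ + ψ/a` move by at most `a · ‖Δz‖_*` when `z` moves by `Δz`.
Strong convexity makes each objective grow quadratically away from its minimizer on `X`; adding the
two growth inequalities gives `N(x₁ − x₂)² ≤ a ⟨z₂ − z₁, x₁ − x₂⟩ ≤ a ‖z₂ − z₁‖_* N(x₁ − x₂)`.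
-/

/-- `ℝ^d`, to be equipped with a norm other than the Euclidean one. -/
def Renormed (d : ℕ) : Type := EuclideanSpace ℝ (Fin d)

instance (d : ℕ) : AddCommGroup (Renormed d) :=
  inferInstanceAs (AddCommGroup (EuclideanSpace ℝ (Fin d)))

noncomputable instance (d : ℕ) : Module ℝ (Renormed d) :=
  inferInstanceAs (Module ℝ (EuclideanSpace ℝ (Fin d)))

instance (d : ℕ) : FiniteDimensional ℝ (Renormed d) :=
  inferInstanceAs (FiniteDimensional ℝ (EuclideanSpace ℝ (Fin d)))

namespace IsNorm

variable {d : ℕ} {N : EuclideanSpace ℝ (Fin d) → ℝ}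

lemma map_zero (hN : IsNorm N) : N 0 = 0 :=
  (hN.2.2 0).2 rfl

lemma map_neg (hN : IsNorm N) (x : EuclideanSpace ℝ (Fin d)) : N (-x) = N x := by
  simpa using hN.2.1 (-1) x

lemma map_sub_comm (hN : IsNorm N) (x y : EuclideanSpace ℝ (Fin d)) : N (x - y) = N (y - x) := by
  rw [← neg_sub, hN.map_neg]

lemma nonneg (hN : IsNorm N) (x : EuclideanSpace ℝ (Fin d)) : 0 ≤ N x := by
  have h := hN.1 x (-x)
  rw [add_neg_cancel, hN.map_zero, hN.map_neg] at h
  linarith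

lemma pos_of_ne_zero (hN : IsNorm N) {x : EuclideanSpace ℝ (Fin d)} (hx : x ≠ 0) : 0 < N x :=
  (hN.nonneg x).lt_of_ne fun h => hx ((hN.2.2 x).1 h.symm)

lemma exists_norm_le_mul (hN : IsNorm N) :
    ∃ C : ℝ, 0 ≤ C ∧ ∀ x : EuclideanSpace ℝ (Fin d), ‖x‖ ≤ C * N x := by
  let : NormedAddCommGroup (Renormed d) := AddGroupNorm.toNormedAddCommGroup
    { toFun := N
      map_zero' := hN.map_zero
      add_le' := hN.1
      neg' := hN.map_neg
      eq_zero_of_map_eq_zero' := fun x hx => (hN.2.2 x).1 hx }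
  let : NormedSpace ℝ (Renormed d) :=
    { norm_smul_le := fun c x => (hN.2.1 c x).le }
  let toEuclidean : Renormed d →L[ℝ] EuclideanSpace ℝ (Fin d) := LinearMap.toContinuousLinearMap
    { toFun := fun v => v, map_add' := fun _ _ => rfl, map_smul' := fun _ _ => rfl }
  exact ⟨‖toEuclidean‖, norm_nonneg _, toEuclidean.le_opNorm⟩

end IsNorm

section DualNorm

variable {d : ℕ} {N : EuclideanSpace ℝ (Fin d) → ℝ}

lemma dualNorm_bddAbove (hN : IsNorm N) (z : EuclideanSpace ℝ (Fin d)) :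
    BddAbove {r : ℝ | ∃ x : EuclideanSpace ℝ (Fin d), N x ≤ 1 ∧ r = ⟪z, x⟫} := by
  obtain ⟨C, hC, hle⟩ := hN.exists_norm_le_mul
  refine ⟨‖z‖ * C, ?_⟩
  rintro _ ⟨x, hx, rfl⟩
  calc ⟪z, x⟫ ≤ ‖z‖ * ‖x‖ := real_inner_le_norm z x
    _ ≤ ‖z‖ * (C * 1) := by gcongr; exact (hle x).trans (by gcongr)
    _ = ‖z‖ * C := by rw [mul_one]

lemma dualNorm_nonneg (hN : IsNorm N) (z : EuclideanSpace ℝ (Fin d)) : 0 ≤ dualNorm N z :=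
  le_csSup (dualNorm_bddAbove hN z) ⟨0, by simp [hN.map_zero]⟩

lemma inner_le_dualNorm_mul (hN : IsNorm N) (z v : EuclideanSpace ℝ (Fin d)) :
    ⟪z, v⟫ ≤ dualNorm N z * N v := by
  rcases eq_or_ne v 0 with rfl | hv
  · simp [hN.map_zero]
  have hNv := hN.pos_of_ne_zero hv
  have hunit : N ((N v)⁻¹ • v) ≤ 1 := by
    rw [hN.2.1, abs_of_pos (inv_pos.2 hNv), inv_mul_cancel₀ hNv.ne']
  have h := le_csSup (dualNorm_bddAbove hN z) ⟨_, hunit, rfl⟩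
  rwa [real_inner_smul_right, inv_mul_le_iff₀ hNv, mul_comm] at h

end DualNorm

namespace StronglyConvexOnWith

variable {d : ℕ} {X : Set (EuclideanSpace ℝ (Fin d))} {N ψ : EuclideanSpace ℝ (Fin d) → ℝ}

lemma inner_add (hψ : StronglyConvexOnWith X N ψ) (w : EuclideanSpace ℝ (Fin d)) :
    StronglyConvexOnWith X N (fun v => ⟪v, w⟫ + ψ v) := by
  intro a ha b hb θ h0 h1
  have hlin : ⟪θ • a + (1 - θ) • b, w⟫ = θ * ⟪a, w⟫ + (1 - θ) * ⟪b, w⟫ := by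
    rw [inner_add_left, real_inner_smul_left, real_inner_smul_left]
  have := hψ ha hb h0 h1
  simp only [hlin]
  linarith

lemma add_sq_div_two_le_of_isMinOn (hXcv : Convex ℝ X) (hψ : StronglyConvexOnWith X N ψ)
    {x₀ : EuclideanSpace ℝ (Fin d)} (hx₀ : x₀ ∈ X) (hmin : IsMinOn ψ X x₀)
    {y : EuclideanSpace ℝ (Fin d)} (hy : y ∈ X) :
    ψ x₀ + N (y - x₀) ^ 2 / 2 ≤ ψ y := by
  set M := N (y - x₀) ^ 2
  -- compare `ψ x₀` with `ψ` at `θ y + (1 - θ) x₀`, divide by `θ` and let `θ → 0⁺`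
  have hθ : ∀ θ ∈ Set.Ioo (0 : ℝ) 1, (1 - θ) / 2 * M ≤ ψ y - ψ x₀ := by
    rintro θ ⟨hθ0, hθ1⟩
    have hmid := isMinOn_iff.1 hmin _
      (hXcv hy hx₀ hθ0.le (sub_nonneg.2 hθ1.le) (add_sub_cancel θ 1))
    have hsc := hψ hy hx₀ hθ0.le hθ1.le
    refine le_of_mul_le_mul_left ?_ hθ0
    linarith
  have hlim : Tendsto (fun θ : ℝ => (1 - θ) / 2 * M) (𝓝[>] 0) (𝓝 (M / 2)) := by
    have hcont : Continuous fun θ : ℝ => (1 - θ) / 2 * M := by fun_prop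
    convert (hcont.tendsto 0).mono_left nhdsWithin_le_nhds using 2
    ring
  have := le_of_tendsto hlim (eventually_of_mem (Ioo_mem_nhdsGT one_pos) hθ)
  linarith

lemma sq_le_inner_sub_of_isMinOn (hXcv : Convex ℝ X) (hN : IsNorm N)
    (hψ : StronglyConvexOnWith X N ψ) {w₁ w₂ x₁ x₂ : EuclideanSpace ℝ (Fin d)}
    (hx₁ : x₁ ∈ X) (hx₂ : x₂ ∈ X)
    (hmin₁ : IsMinOn (fun v => ⟪v, w₁⟫ + ψ v) X x₁)
    (hmin₂ : IsMinOn (fun v => ⟪v, w₂⟫ + ψ v) X x₂) :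
    N (x₁ - x₂) ^ 2 ≤ ⟪w₂ - w₁, x₁ - x₂⟫ := by
  have h₁ := (hψ.inner_add w₁).add_sq_div_two_le_of_isMinOn hXcv hx₁ hmin₁ hx₂
  have h₂ := (hψ.inner_add w₂).add_sq_div_two_le_of_isMinOn hXcv hx₂ hmin₂ hx₁
  rw [hN.map_sub_comm] at h₁
  simp only [inner_sub_left, inner_sub_right, real_inner_comm _ w₁, real_inner_comm _ w₂]
  linarith

lemma le_mul_dualNorm_of_isMinOn (hXcv : Convex ℝ X) (hN : IsNorm N)
    (hψ : StronglyConvexOnWith X N ψ) {a : ℝ} (ha : 0 < a) {z₁ z₂ x₁ x₂ : EuclideanSpace ℝ (Fin d)}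
    (hx₁ : x₁ ∈ X) (hx₂ : x₂ ∈ X)
    (hmin₁ : IsMinOn (fun v => ⟪v, z₁⟫ + ψ v / a) X x₁)
    (hmin₂ : IsMinOn (fun v => ⟪v, z₂⟫ + ψ v / a) X x₂) :
    N (x₁ - x₂) ≤ a * dualNorm N (z₂ - z₁) := by
  have hscale : ∀ z : EuclideanSpace ℝ (Fin d),
      (fun v => ⟪v, a • z⟫ + ψ v) = fun v => a * (⟪v, z⟫ + ψ v / a) := by
    intro z
    ext v
    rw [real_inner_smul_right, mul_add, mul_div_cancel₀ _ ha.ne']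
  have hmin {z x} (h : IsMinOn (fun v => ⟪v, z⟫ + ψ v / a) X x) :
      IsMinOn (fun v => ⟪v, a • z⟫ + ψ v) X x := by
    rw [hscale]
    exact isMinOn_iff.2 fun v hv => mul_le_mul_of_nonneg_left (isMinOn_iff.1 h v hv) ha.le
  have hsq := hψ.sq_le_inner_sub_of_isMinOn hXcv hN hx₁ hx₂ (hmin hmin₁) (hmin hmin₂)
  rw [← smul_sub, real_inner_smul_left] at hsq
  have hdual := inner_le_dualNorm_mul hN (z₂ - z₁) (x₁ - x₂)
  have hD := mul_nonneg ha.le (dualNorm_nonneg hN (z₂ - z₁))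
  nlinarith [hN.nonneg (x₁ - x₂)]

end StronglyConvexOnWith

theorem network_disagreement_bound_general {d n : ℕ}
    (X : Set (EuclideanSpace ℝ (Fin d))) (hXcv : Convex ℝ X)
    (N : EuclideanSpace ℝ (Fin d) → ℝ) (hN : IsNorm N)
    (ψ : EuclideanSpace ℝ (Fin d) → ℝ) (hψ : StronglyConvexOnWith X N ψ)
    (α : ℕ → ℝ) (hαpos : ∀ t, 0 < α t)
    (T : ℕ) (L : ℝ)
    (z : Fin n → ℕ → EuclideanSpace ℝ (Fin d))
    (zbar : ℕ → EuclideanSpace ℝ (Fin d))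
    (g : Fin n → ℕ → EuclideanSpace ℝ (Fin d))
    (hgL : ∀ j t, t ∈ Icc 1 T → dualNorm N (g j t) ≤ L)
    (x : Fin n → ℕ → EuclideanSpace ℝ (Fin d))
    (hxX : ∀ j t, t ∈ Icc 1 T → x j t ∈ X)
    (hxmin : ∀ j t, t ∈ Icc 1 T → ∀ v ∈ X,
      ⟪x j t, z j t⟫ + ψ (x j t) / α (t - 1) ≤ ⟪v, z j t⟫ + ψ v / α (t - 1))
    (y : ℕ → EuclideanSpace ℝ (Fin d))
    (hyX : ∀ t, t ∈ Icc 1 T → y t ∈ X)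
    (hymin : ∀ t, t ∈ Icc 1 T → ∀ v ∈ X,
      ⟪y t, zbar t⟫ + ψ (y t) / α (t - 1) ≤ ⟪v, zbar t⟫ + ψ v / α (t - 1)) :
    ∑ t ∈ Icc 1 T, ∑ j, ⟪g j t, x j t - y t⟫ ≤
      L * ∑ t ∈ Icc 1 T, ∑ j, α (t - 1) * dualNorm N (zbar t - z j t) := by
  have hterm : ∀ t ∈ Icc 1 T, ∀ j,
      ⟪g j t, x j t - y t⟫ ≤ L * (α (t - 1) * dualNorm N (zbar t - z j t)) := by
    intro t ht j
    have hmove : N (x j t - y t) ≤ α (t - 1) * dualNorm N (zbar t - z j t) :=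
      hψ.le_mul_dualNorm_of_isMinOn hXcv hN (hαpos (t - 1)) (hxX j t ht) (hyX t ht)
        (isMinOn_iff.2 (hxmin j t ht)) (isMinOn_iff.2 (hymin t ht))
    calc ⟪g j t, x j t - y t⟫ ≤ dualNorm N (g j t) * N (x j t - y t) :=
          inner_le_dualNorm_mul hN _ _
      _ ≤ L * (α (t - 1) * dualNorm N (zbar t - z j t)) :=
          mul_le_mul (hgL j t ht) hmove (hN.nonneg _) ((dualNorm_nonneg hN _).trans (hgL j t ht))
  simp only [mul_sum]
  exact sum_le_sum fun t ht => sum_le_sum fun j _ => hterm t ht j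

/-- **Bound on the network disagreement term Ψ₂:**
`∑_{t=1}^T ∑_{j=1}^n ⟨g_j(t), x_j(t) − y(t)⟩ ≤ L ∑_{t=1}^T ∑_{j=1}^n α(t−1) ‖z̄(t) − z_j(t)‖_*`. -/
theorem network_disagreement_bound {d n : ℕ}
    (X : Set (EuclideanSpace ℝ (Fin d))) (hXcl : IsClosed X) (hXcv : Convex ℝ X)
    (N : EuclideanSpace ℝ (Fin d) → ℝ) (hN : IsNorm N)
    (ψ : EuclideanSpace ℝ (Fin d) → ℝ) (hψ : StronglyConvexOnWith X N ψ)
    (α : ℕ → ℝ) (hαpos : ∀ t, 0 < α t)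
    (T : ℕ) (L : ℝ)
    (z : Fin n → ℕ → EuclideanSpace ℝ (Fin d))
    (zbar : ℕ → EuclideanSpace ℝ (Fin d))
    (g : Fin n → ℕ → EuclideanSpace ℝ (Fin d))
    (hgL : ∀ j t, t ∈ Icc 1 T → dualNorm N (g j t) ≤ L)
    (x : Fin n → ℕ → EuclideanSpace ℝ (Fin d))
    (hxX : ∀ j t, t ∈ Icc 1 T → x j t ∈ X)
    (hxmin : ∀ j t, t ∈ Icc 1 T → ∀ v ∈ X,
      ⟪x j t, z j t⟫ + ψ (x j t) / α (t - 1) ≤ ⟪v, z j t⟫ + ψ v / α (t - 1))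
    (y : ℕ → EuclideanSpace ℝ (Fin d))
    (hyX : ∀ t, t ∈ Icc 1 T → y t ∈ X)
    (hymin : ∀ t, t ∈ Icc 1 T → ∀ v ∈ X,
      ⟪y t, zbar t⟫ + ψ (y t) / α (t - 1) ≤ ⟪v, zbar t⟫ + ψ v / α (t - 1)) :
    ∑ t ∈ Icc 1 T, ∑ j, ⟪g j t, x j t - y t⟫ ≤
      L * ∑ t ∈ Icc 1 T, ∑ j, α (t - 1) * dualNorm N (zbar t - z j t) :=
  network_disagreement_bound_general X hXcv N hN ψ hψ α hαpos T L z zbar g hgL x hxX hxmin y hyX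
    hymin
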